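/- arXiv:2203.10987 — 2 statements merged into one kernel-verified Lean document; each statement's English description precedes it below -/
import Mathlib

section
/- Let E be a directed graph. The operator (H,S) ↦ (H⊥, S⊥) on the set of admissible pairs of E satisfies (H⊥⊥⊥, S⊥⊥⊥) = (H⊥, S⊥) for every admissible pair (H,S); consequently the operator (H,S) ↦ (H⊥⊥, S⊥⊥) is idempotent. -/
namespace GraphAnn

variable {V E : Type*}

/-- `u ≥ v`: there is a (possibly trivial) path from `u` to `v`. -/
def Reach (s r : E → V) : V → V → Prop :=
  Relation.ReflTransGen (fun a b => ∃ e, s e = a ∧ r e = b)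

/-- The root `R(W)` of a set of vertices. -/
def Root (s r : E → V) (W : Set V) : Set V :=
  {u | ∃ v ∈ W, Reach s r u v}

def Hereditary (s r : E → V) (H : Set V) : Prop :=
  ∀ u v, u ∈ H → Reach s r u v → v ∈ H

def IsSink (s : E → V) (v : V) : Prop := ∀ e : E, s e ≠ v

def IsInfiniteEmitter (s : E → V) (v : V) : Prop := {e : E | s e = v}.Infinite

def IsRegular (s : E → V) (v : V) : Prop := ¬ IsSink s v ∧ ¬ IsInfiniteEmitter s v

def Saturated (s r : E → V) (H : Set V) : Prop :=
  ∀ v, IsRegular s v → (∀ e : E, s e = v → r e ∈ H) → v ∈ H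

/-- `V⊥ = E⁰ − R(V)`. -/
def perp (s r : E → V) (W : Set V) : Set V := {v | v ∉ Root s r W}

/-- Breaking vertices `B_H`. -/
def Breaking (s r : E → V) (H : Set V) : Set V :=
  {v | v ∉ H ∧ IsInfiniteEmitter s v ∧
    {e : E | s e = v ∧ r e ∉ H}.Nonempty ∧ {e : E | s e = v ∧ r e ∉ H}.Finite}

/-- `(H,S)` is an admissible pair. -/
def Admissible (s r : E → V) (H S : Set V) : Prop :=
  Hereditary s r H ∧ Saturated s r H ∧ S ⊆ Breaking s r H

/-- `S⊥ = B_{H⊥} − S`. -/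
def Sperp (s r : E → V) (H S : Set V) : Set V := Breaking s r (perp s r H) \ S

/-- A cycle: a closed path of positive length in which distinct edges have
distinct sources. -/
structure GCycle (s r : E → V) where
  edges : List E
  ne : edges ≠ []
  chain : edges.Chain' (fun e f => r e = s f)
  closed : r (edges.getLast ne) = s (edges.head ne)
  srcNodup : (edges.map s).Nodup

/-- The vertex set `c⁰` of a cycle. -/
def GCycle.verts {s r : E → V} (c : GCycle s r) : Set V :=
  {v | ∃ e ∈ c.edges, s e = v}

/-- A cycle has an exit. -/
def GCycle.HasExit {s r : E → V} (c : GCycle s r) : Prop :=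
  ∃ e, s e ∈ c.verts ∧ e ∉ c.edges

/-- An extreme cycle: it has an exit and every exit returns. -/
def GCycle.Extreme {s r : E → V} (c : GCycle s r) : Prop :=
  c.HasExit ∧ ∀ v ∈ c.verts, ∀ w, Reach s r v w → ∃ u ∈ c.verts, Reach s r w u

/-- The vertex set `α⁰` of an infinite path `α`. -/
def InfPathVerts (s : E → V) (α : ℕ → E) : Set V := {v | ∃ n, s (α n) = v}

/-- Conditions (a), (b), (c): the graph is all-reflexive. -/
def AllReflexiveGraph (s r : E → V) : Prop :=
  (∀ c : GCycle s r, ¬ c.HasExit ∨ c.Extreme) ∧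
  (∀ v, IsInfiniteEmitter s v → ∃ c : GCycle s r, v ∈ c.verts) ∧
  (∀ α : ℕ → E, (∀ n, r (α n) = s (α (n + 1))) →
    {e : E | s e ∈ InfPathVerts s α ∧ r e ∉ Root s r (InfPathVerts s α)}.Finite)

/-!
For hereditary `H` we have `H ⊆ H⊥⊥`, and `H⊥` is always hereditary, so antitonicity of `⊥`
gives `H⊥⊥⊥ = H⊥`. Unfolding, `S⊥⊥⊥ = B_{H⊥} − (B_{H⊥⊥} − (B_{H⊥} − S))`, which equals
`B_{H⊥} − S` as soon as `S ∩ B_{H⊥} ⊆ B_{H⊥⊥}`. A vertex breaking for both `H` and `H⊥`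
emits an edge into `H⊥` (all but finitely many of its edges do), and the edges it emits
outside `H⊥⊥ ⊇ H` are among the finitely many leaving `H`; so it is breaking for `H⊥⊥`.
-/

theorem _root_.Set.sdiff_sdiff_sdiff_of_inter_subset {α : Type*} {A C S : Set α}
    (h : S ∩ A ⊆ C) : A \ (C \ (A \ S)) = A \ S := by
  rw [Set.sdiff_sdiff_right, Set.inter_eq_right.mpr Set.sdiff_subset, Set.union_eq_right]
  exact fun x ⟨hxA, hxC⟩ => ⟨hxA, fun hxS => hxC (h ⟨hxS, hxA⟩)⟩

lemma subset_root (s r : E → V) (W : Set V) : W ⊆ Root s r W :=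
  fun v hv => ⟨v, hv, Relation.ReflTransGen.refl⟩

lemma notMem_perp_of_mem (s r : E → V) {W : Set V} {v : V} (hv : v ∈ W) :
    v ∉ perp s r W :=
  fun h => h (subset_root s r W hv)

lemma perp_anti (s r : E → V) {A B : Set V} (h : A ⊆ B) : perp s r B ⊆ perp s r A :=
  fun _ hv ⟨w, hw, hr⟩ => hv ⟨w, h hw, hr⟩

lemma perp_hereditary (s r : E → V) (W : Set V) : Hereditary s r (perp s r W) :=
  fun _ _ hu huv ⟨w, hw, hvw⟩ => hu ⟨w, hw, huv.trans hvw⟩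

lemma Hereditary.subset_perp_perp {s r : E → V} {H : Set V} (hH : Hereditary s r H) :
    H ⊆ perp s r (perp s r H) :=
  fun v hv ⟨u, hu, hvu⟩ => notMem_perp_of_mem s r (hH v u hv hvu) hu

lemma Hereditary.perp_perp_perp {s r : E → V} {H : Set V} (hH : Hereditary s r H) :
    perp s r (perp s r (perp s r H)) = perp s r H :=
  (perp_anti s r hH.subset_perp_perp).antisymm (perp_hereditary s r H).subset_perp_perp

lemma exists_edge_range_mem_of_finite {s r : E → V} {G : Set V} {x : V}
    (hinf : IsInfiniteEmitter s x) (hfin : {e : E | s e = x ∧ r e ∉ G}.Finite) :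
    ∃ e, s e = x ∧ r e ∈ G := by
  obtain ⟨e, hes, hne⟩ := (hinf.sdiff hfin).nonempty
  exact ⟨e, hes, not_not.mp fun hr => hne ⟨hes, hr⟩⟩

lemma Hereditary.breaking_inter_breaking_perp_subset {s r : E → V} {H : Set V}
    (hH : Hereditary s r H) :
    Breaking s r H ∩ Breaking s r (perp s r H) ⊆ Breaking s r (perp s r (perp s r H)) := by
  rintro x ⟨⟨-, hinf, -, hfinH⟩, ⟨-, -, -, hfinP⟩⟩
  obtain ⟨e, hes, her⟩ := exists_edge_range_mem_of_finite hinf hfinP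
  have her' : r e ∉ perp s r (perp s r H) := notMem_perp_of_mem s r her
  refine ⟨fun hx => her' ?_, hinf, ⟨e, hes, her'⟩, ?_⟩
  · exact perp_hereditary s r _ x (r e) hx (.single ⟨e, hes, rfl⟩)
  · exact hfinH.subset fun e ⟨hes, her⟩ => ⟨hes, fun hrH => her (hH.subset_perp_perp hrH)⟩

/-- `(H⊥⊥⊥, S⊥⊥⊥) = (H⊥, S⊥)` for every admissible pair `(H,S)`; consequently
the operator `(H,S) ↦ (H⊥⊥, S⊥⊥)` is idempotent. -/
theorem perp_perp_perp (s r : E → V) (H S : Set V) (h : Admissible s r H S) :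
    perp s r (perp s r (perp s r H)) = perp s r H ∧
      Sperp s r (perp s r (perp s r H)) (Sperp s r (perp s r H) (Sperp s r H S)) =
        Sperp s r H S := by
  obtain ⟨hH, -, hSB⟩ := h
  refine ⟨hH.perp_perp_perp, ?_⟩
  unfold Sperp
  rw [hH.perp_perp_perp]
  exact Set.sdiff_sdiff_sdiff_of_inter_subset fun x ⟨hxS, hxB⟩ =>
    hH.breaking_inter_breaking_perp_subset ⟨hSB hxS, hxB⟩

end GraphAnn
end

section
/- Let E be a directed graph such that: (a) each cycle of E is either without exits or extreme; (b) each infinite emitter of E lies on a cycle; and (c) for every infinite path α of E, only finitely many edges e with s(e) ∈ α⁰ satisfy r(e) ∉ R(α⁰). Then for every hereditary and saturated set H ⊆ E⁰ one has R(H) − H ⊆ R(H⊥). -/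
namespace GraphAnn

variable {V E : Type*}

/-!
Suppose `u ∈ R(H) − H` lies outside `R(H⊥)`. Then every vertex reachable from `u` lies in `R(H)`;
call such vertices outside `H` *trapped*. A trapped vertex lies on no cycle: by (a) the cycle
would either have no exit, and then could not reach `H`, or be extreme, and then be reached back
from `H`, hence lie in `H`. So by (b) a trapped vertex is regular, and saturation gives it an edge
to another trapped vertex. Following such edges, and taking the first edge of a shortest path
to `H` whenever it does not end in `H`, yields an infinite path of trapped vertices which repeats
no vertex (a repeat would close a cycle) and passes infinitely often a vertex with an edge into
`H`. Since `H` is hereditary and misses the path, these are infinitely many edges leaving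
`R(α⁰)`, contradicting (c).
-/

lemma infinite_setOf_le_of_lt {f : ℕ → ℕ} {b : ℕ} (hf : ∀ n, b < f n → f (n + 1) < f n) :
    {n | f n ≤ b}.Infinite := by
  refine Set.infinite_of_forall_exists_gt fun a => ?_
  suffices ∀ k n, f n ≤ k → ∃ m, n ≤ m ∧ f m ≤ b by
    obtain ⟨m, hm, hfm⟩ := this _ (a + 1) le_rfl
    exact ⟨m, hfm, hm⟩
  intro k
  induction k with
  | zero => exact fun n hn => ⟨n, le_rfl, by omega⟩
  | succ k ih =>
    intro n hn
    by_cases hb : f n ≤ b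
    · exact ⟨n, le_rfl, hb⟩
    · obtain ⟨m, hm, hfm⟩ := ih (n + 1) (by have := hf n (by omega); omega)
      exact ⟨m, by omega, hfm⟩

namespace GCycle

variable {s r : E → V} (c : GCycle s r)

lemma range_getElem {i : ℕ} (hi : i + 1 < c.edges.length) :
    r c.edges[i] = s c.edges[i + 1] := by
  simpa using List.isChain_iff_getElem.mp c.chain i hi

lemma range_getElem_length_sub_one :
    r (c.edges[c.edges.length - 1]'(by simp [List.length_pos_iff, c.ne])) =
      s (c.edges[0]'(by simp [List.length_pos_iff, c.ne])) := by
  simpa [List.getLast_eq_getElem, List.head_eq_getElem] using c.closed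

lemma reach_getElem {i j : ℕ} (hij : i ≤ j) (hj : j < c.edges.length) :
    Reach s r (s (c.edges[i]'(by omega))) (s c.edges[j]) := by
  induction j, hij using Nat.le_induction with
  | base => exact .refl
  | succ j _ ih => exact (ih (by omega)).tail ⟨_, rfl, c.range_getElem hj⟩

lemma reach_of_mem_verts {x y : V} (hx : x ∈ c.verts) (hy : y ∈ c.verts) : Reach s r x y := by
  obtain ⟨e, he, rfl⟩ := hx
  obtain ⟨f, hf, rfl⟩ := hy
  obtain ⟨i, hi, rfl⟩ := List.mem_iff_getElem.mp he
  obtain ⟨j, hj, rfl⟩ := List.mem_iff_getElem.mp hf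
  have hlast := c.reach_getElem (i := i) (j := c.edges.length - 1) (by omega) (by omega)
  exact (hlast.tail ⟨_, rfl, c.range_getElem_length_sub_one⟩).trans
    (c.reach_getElem (Nat.zero_le j) hj)

lemma range_mem_verts {e : E} (he : e ∈ c.edges) : r e ∈ c.verts := by
  obtain ⟨i, hi, rfl⟩ := List.mem_iff_getElem.mp he
  by_cases h : i + 1 < c.edges.length
  · exact ⟨_, List.getElem_mem h, (c.range_getElem h).symm⟩
  · obtain rfl : i = c.edges.length - 1 := by omega
    exact ⟨_, List.getElem_mem _, c.range_getElem_length_sub_one.symm⟩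

lemma mem_verts_of_reach (hc : ¬ c.HasExit) {v w : V} (hv : v ∈ c.verts)
    (hvw : Reach s r v w) : w ∈ c.verts := by
  induction hvw with
  | refl => exact hv
  | tail _ hstep ih =>
    obtain ⟨e, rfl, rfl⟩ := hstep
    exact c.range_mem_verts (by_contra fun he => hc ⟨e, ih, he⟩)

end GCycle

variable {s r : E → V}

lemma exists_cycle_of_not_injective {α : ℕ → E} (hα : ∀ n, r (α n) = s (α (n + 1)))
    (hinj : ¬ (s ∘ α).Injective) : ∃ c : GCycle s r, c.verts ⊆ InfPathVerts s α := by
  classical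
  have hgap : ∃ d, 0 < d ∧ ∃ i, s (α i) = s (α (i + d)) := by
    obtain ⟨a, b, hab, hne⟩ := Function.not_injective_iff.mp hinj
    rcases lt_or_gt_of_ne hne with h | h
    · exact ⟨b - a, by omega, a, by rwa [Nat.add_sub_cancel' h.le]⟩
    · exact ⟨a - b, by omega, b, by rw [Nat.add_sub_cancel' h.le]; exact hab.symm⟩
  -- a closed segment of minimal length visits no vertex twice
  obtain ⟨hd, i, hi⟩ := Nat.find_spec hgap
  set d := Nat.find hgap
  have hne : List.ofFn (fun k : Fin d => α (i + k)) ≠ [] := by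
    rw [Ne, List.ofFn_eq_nil_iff]
    omega
  refine ⟨⟨List.ofFn (fun k : Fin d => α (i + k)), hne, ?_, ?_, ?_⟩, ?_⟩
  · exact List.isChain_ofFn.mpr fun k _ => hα (i + k)
  · have hend : i + (d - 1) + 1 = i + d := by omega
    simpa [List.getLast_ofFn, List.head_ofFn, hα, hend] using hi.symm
  · have hsep : ∀ a b : Fin d, a < b → s (α (i + a)) ≠ s (α (i + b)) := fun a b hab heq =>
      Nat.find_min hgap (m := b - a) (by omega)
        ⟨by omega, i + a, by rwa [Nat.add_assoc, Nat.add_sub_cancel' hab.le]⟩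
    rw [List.map_ofFn, List.nodup_ofFn]
    intro a b hab
    by_contra hne
    rcases lt_or_gt_of_ne hne with h | h
    · exact hsep a b h hab
    · exact hsep b a h hab.symm
  · rintro _ ⟨e, he, rfl⟩
    obtain ⟨k, rfl⟩ := List.mem_ofFn.mp he
    exact ⟨_, rfl⟩

def ReachIn (s r : E → V) : ℕ → V → V → Prop
  | 0, a, b => a = b
  | n + 1, a, b => ∃ e, s e = a ∧ ReachIn s r n (r e) b

lemma Reach.exists_reachIn {a b : V} (h : Reach s r a b) : ∃ n, ReachIn s r n a b := by
  induction h using Relation.ReflTransGen.head_induction_on with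
  | refl => exact ⟨0, rfl⟩
  | head hstep _ ih =>
    obtain ⟨e, he, rfl⟩ := hstep
    obtain ⟨n, hn⟩ := ih
    exact ⟨n + 1, e, he, hn⟩

section Distance

variable {H : Set V} {v : V}

noncomputable def distTo (s r : E → V) (H : Set V) (v : V) : ℕ :=
  sInf {n | ∃ h ∈ H, ReachIn s r n v h}

lemma distTo_le {h : V} {n : ℕ} (hh : h ∈ H) (hn : ReachIn s r n v h) : distTo s r H v ≤ n :=
  Nat.sInf_le ⟨h, hh, hn⟩

lemma exists_reachIn_distTo (hv : v ∈ Root s r H) :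
    ∃ h ∈ H, ReachIn s r (distTo s r H v) v h := by
  obtain ⟨h, hh, hvh⟩ := hv
  obtain ⟨n, hn⟩ := hvh.exists_reachIn
  exact Nat.sInf_mem (s := {n | ∃ h ∈ H, ReachIn s r n v h}) ⟨n, h, hh, hn⟩

lemma exists_edge_distTo_lt (hv : v ∈ Root s r H) (hd : 1 < distTo s r H v) :
    ∃ e, s e = v ∧ r e ∉ H ∧ distTo s r H (r e) < distTo s r H v := by
  obtain ⟨h, hh, hn⟩ := exists_reachIn_distTo hv
  obtain ⟨k, hk⟩ : ∃ k, distTo s r H v = k + 1 := ⟨_, (Nat.sub_add_cancel hd.le).symm⟩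
  rw [hk] at hn
  obtain ⟨e, he, hn⟩ := hn
  refine ⟨e, he, fun hre => ?_, by have := distTo_le hh hn; omega⟩
  have := distTo_le hre (show ReachIn s r 1 v (r e) from ⟨e, he, rfl⟩)
  omega

lemma exists_edge_mem_of_distTo_le_one (hv : v ∈ Root s r H) (hvH : v ∉ H)
    (hd : distTo s r H v ≤ 1) : ∃ e, s e = v ∧ r e ∈ H := by
  obtain ⟨h, hh, hn⟩ := exists_reachIn_distTo hv
  rcases Nat.le_one_iff_eq_zero_or_eq_one.mp hd with hd | hd <;> rw [hd] at hn
  · exact absurd (hn ▸ hh) hvH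
  · obtain ⟨e, he, rfl⟩ := hn
    exact ⟨e, he, hh⟩

end Distance

def Trapped (s r : E → V) (H : Set V) (v : V) : Prop :=
  v ∉ H ∧ ∀ w, Reach s r v w → w ∈ Root s r H

namespace Trapped

variable {H : Set V} {v : V}

lemma of_edge (hv : Trapped s r H v) {e : E} (he : s e = v) (hre : r e ∉ H) :
    Trapped s r H (r e) :=
  ⟨hre, fun w hw => hv.2 w (.head ⟨e, he, rfl⟩ hw)⟩

lemma not_mem_verts (hA : ∀ c : GCycle s r, ¬ c.HasExit ∨ c.Extreme) (hHer : Hereditary s r H)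
    (hv : Trapped s r H v) (c : GCycle s r) : v ∉ c.verts := by
  intro hvc
  obtain ⟨h, hH, hvh⟩ := hv.2 v .refl
  have hcH : ∀ w ∈ c.verts, w ∉ H := fun w hw hwH =>
    hv.1 (hHer w v hwH (c.reach_of_mem_verts hw hvc))
  rcases hA c with hno | ⟨-, hret⟩
  · exact hcH h (c.mem_verts_of_reach hno hvc hvh) hH
  · obtain ⟨w, hw, hhw⟩ := hret v hvc h hvh
    exact hcH w hw (hHer h w hH hhw)

lemma isRegular (hAll : AllReflexiveGraph s r) (hHer : Hereditary s r H)
    (hv : Trapped s r H v) : IsRegular s v := by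
  obtain ⟨h, hH, hvh⟩ := hv.2 v .refl
  refine ⟨fun hsink => ?_, fun hinf => ?_⟩
  · rcases hvh.cases_head with rfl | ⟨_, ⟨e, he, -⟩, -⟩
    · exact hv.1 hH
    · exact hsink e he
  · obtain ⟨c, hc⟩ := hAll.2.1 v hinf
    exact hv.not_mem_verts hAll.1 hHer c hc

lemma exists_edge (hAll : AllReflexiveGraph s r) (hHer : Hereditary s r H)
    (hSat : Saturated s r H) (hv : Trapped s r H v) : ∃ e, s e = v ∧ Trapped s r H (r e) := by
  obtain ⟨e, he, hre⟩ : ∃ e, s e = v ∧ r e ∉ H := by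
    by_contra! hall
    exact hv.1 (hSat v (hv.isRegular hAll hHer) hall)
  exact ⟨e, he, hv.of_edge he hre⟩

lemma exists_next (hAll : AllReflexiveGraph s r) (hHer : Hereditary s r H)
    (hSat : Saturated s r H) (hv : Trapped s r H v) :
    ∃ e, s e = v ∧ Trapped s r H (r e) ∧
      (1 < distTo s r H v → distTo s r H (r e) < distTo s r H v) := by
  by_cases hd : 1 < distTo s r H v
  · obtain ⟨e, he, hre, hlt⟩ := exists_edge_distTo_lt (hv.2 v .refl) hd
    exact ⟨e, he, hv.of_edge he hre, fun _ => hlt⟩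
  · obtain ⟨e, he, hte⟩ := hv.exists_edge hAll hHer hSat
    exact ⟨e, he, hte, fun h => absurd h hd⟩

lemma exists_infinite_path (hAll : AllReflexiveGraph s r) (hHer : Hereditary s r H)
    (hSat : Saturated s r H) {u : V} (hu : Trapped s r H u) :
    ∃ α : ℕ → E, (∀ n, r (α n) = s (α (n + 1))) ∧ (∀ n, Trapped s r H (s (α n))) ∧
      ∀ n, 1 < distTo s r H (s (α n)) →
        distTo s r H (s (α (n + 1))) < distTo s r H (s (α n)) := by
  choose next hsrc htr hdist using fun v (hv : Trapped s r H v) => hv.exists_next hAll hHer hSat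
  let step : {v // Trapped s r H v} → {v // Trapped s r H v} :=
    fun v => ⟨r (next v v.2), htr v v.2⟩
  let vert : ℕ → {v // Trapped s r H v} := fun n => step^[n] ⟨u, hu⟩
  have hvert : ∀ n, (vert (n + 1)).1 = r (next _ (vert n).2) := fun n =>
    congrArg Subtype.val (Function.iterate_succ_apply' step n ⟨u, hu⟩)
  refine ⟨fun n => next _ (vert n).2, fun n => ?_, fun n => ?_, fun n => ?_⟩
  · rw [hsrc, hvert]
  · rw [hsrc]
    exact (vert n).2
  · rw [hsrc, hsrc, hvert]
    exact hdist _ _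

end Trapped

lemma not_trapped (hAll : AllReflexiveGraph s r) {H : Set V} (hHer : Hereditary s r H)
    (hSat : Saturated s r H) (u : V) : ¬ Trapped s r H u := by
  intro hu
  obtain ⟨α, hα, htr, hdist⟩ := hu.exists_infinite_path hAll hHer hSat
  have hinj : (s ∘ α).Injective := by
    by_contra hinj
    obtain ⟨c, hc⟩ := exists_cycle_of_not_injective hα hinj
    obtain ⟨m, hm⟩ := hc ⟨_, List.head_mem c.ne, rfl⟩
    exact (htr m).not_mem_verts hAll.1 hHer c (hm ▸ ⟨_, List.head_mem c.ne, rfl⟩)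
  have hfin : {n | distTo s r H (s (α n)) ≤ 1}.Finite := by
    refine (((hAll.2.2 α hα).image s).preimage hinj.injOn).subset fun n hn => ?_
    obtain ⟨e, he, hre⟩ := exists_edge_mem_of_distTo_le_one ((htr n).2 _ .refl) (htr n).1 hn
    refine ⟨e, ⟨⟨n, he.symm⟩, ?_⟩, he⟩
    rintro ⟨w, ⟨m, rfl⟩, hw⟩
    exact (htr m).1 (hHer _ _ hre hw)
  exact infinite_setOf_le_of_lt hdist hfin

/-- If `E` is all-reflexive (conditions (a), (b), (c)), then for every
hereditary and saturated `H ⊆ E⁰` one has `R(H) − H ⊆ R(H⊥)`. -/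
theorem root_diff_subset_root_perp (s r : E → V)
    (hAll : AllReflexiveGraph s r)
    (H : Set V) (hHer : Hereditary s r H) (hSat : Saturated s r H) :
    Root s r H \ H ⊆ Root s r (perp s r H) := by
  rintro u ⟨-, huH⟩
  by_contra hu
  exact not_trapped hAll hHer hSat u ⟨huH, fun w huw => by_contra fun hw => hu ⟨w, hw, huw⟩⟩

end GraphAnn
end
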